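/- Assume the non-parallel condition (NP): A e_i ≠ η A e_j for all indices i ≠ j and all η ∈ ℝ. Fix an index j and consider the vector u = W⁻¹ P e_j, i.e., u_i = w_i⁻¹ (P e_j)_i. Then |u_i| < |u_j| for every i ≠ j (so j is the unique index maximizing |u_i|), and u_j = ‖P e_j‖₂ ≤ 1. -/

import Mathlib

open scoped RealInnerProductSpace Classical

/-- The `i`-th standard basis vector of `ℝⁿ`. -/
noncomputable def stdBasis (n : ℕ) (i : Fin n) : EuclideanSpace ℝ (Fin n) :=
  EuclideanSpace.single i 1

/-- `P`: the orthogonal projection of `ℝⁿ` onto the orthogonal complement of `ker A`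
(this equals `A†A` for the Moore–Penrose pseudoinverse `A†`). -/
noncomputable def proj {m n : ℕ} (A : EuclideanSpace ℝ (Fin n) →ₗ[ℝ] EuclideanSpace ℝ (Fin m))
    (x : EuclideanSpace ℝ (Fin n)) : EuclideanSpace ℝ (Fin n) :=
  (Submodule.orthogonalProjection (LinearMap.ker A)ᗮ x : EuclideanSpace ℝ (Fin n))

/-- The weights `w i = ‖P e_i‖₂`. -/
noncomputable def wgt {m n : ℕ} (A : EuclideanSpace ℝ (Fin n) →ₗ[ℝ] EuclideanSpace ℝ (Fin m))
    (i : Fin n) : ℝ :=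
  ‖proj A (stdBasis n i)‖

/-- The weighted ℓ¹ norm `‖W x‖₁ = ∑ i, w i * |x i|`. -/
noncomputable def wl1 {m n : ℕ} (A : EuclideanSpace ℝ (Fin n) →ₗ[ℝ] EuclideanSpace ℝ (Fin m))
    (x : EuclideanSpace ℝ (Fin n)) : ℝ :=
  ∑ i, wgt A i * |x i|

/-! The coordinates of `P e_j` are the inner products `⟪P e_i, P e_j⟫`. Cauchy–Schwarz bounds
each by `w_i ‖P e_j‖`, strictly for `i ≠ j` because (NP) forces `P e_i` and `P e_j` to be
non-parallel (`P x = η P y` exactly when `A x = η A y`), while `⟪P e_j, P e_j⟫ = ‖P e_j‖²`. -/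

theorem abs_real_inner_lt_norm_mul_norm {F : Type*} [NormedAddCommGroup F]
    [InnerProductSpace ℝ F] {x y : F} (hx : x ≠ 0) (hy : ∀ r : ℝ, y ≠ r • x) :
    |⟪x, y⟫| < ‖x‖ * ‖y‖ := by
  refine (abs_real_inner_le_norm x y).lt_of_ne fun h ↦ ?_
  have hparallel : x = 0 ∨ ∃ r : ℝ, y = r • x :=
    ((norm_inner_eq_norm_tfae ℝ x y).out 0 2).mp (by rwa [Real.norm_eq_abs])
  obtain ⟨r, rfl⟩ := hparallel.resolve_left hx
  exact hy r rfl

theorem norm_stdBasis (n : ℕ) (i : Fin n) : ‖stdBasis n i‖ = 1 := by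
  rw [stdBasis, PiLp.norm_single, norm_one]

section Projection

variable {m n : ℕ} (A : EuclideanSpace ℝ (Fin n) →ₗ[ℝ] EuclideanSpace ℝ (Fin m))

theorem proj_eq_starProjection : proj A = (LinearMap.ker A)ᗮ.starProjection := rfl

theorem proj_eq_zero_iff (x : EuclideanSpace ℝ (Fin n)) : proj A x = 0 ↔ A x = 0 := by
  rw [proj_eq_starProjection, Submodule.starProjection_apply_eq_zero_iff,
    Submodule.orthogonal_orthogonal, LinearMap.mem_ker]

theorem proj_eq_smul_proj_iff {x y : EuclideanSpace ℝ (Fin n)} {η : ℝ} :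
    proj A x = η • proj A y ↔ A x = η • A y := by
  rw [← sub_eq_zero, proj_eq_starProjection, ← map_smul, ← map_sub, ← proj_eq_starProjection,
    proj_eq_zero_iff, map_sub, map_smul, sub_eq_zero]

theorem proj_apply (x : EuclideanSpace ℝ (Fin n)) (i : Fin n) :
    proj A x i = ⟪proj A (stdBasis n i), proj A x⟫ := by
  rw [proj, proj, ← Submodule.coe_inner, Submodule.inner_orthogonalProjectionOnto_eq_of_mem_right,
    stdBasis, EuclideanSpace.inner_single_left, map_one, one_mul]

theorem proj_stdBasis_apply_self (j : Fin n) :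
    proj A (stdBasis n j) j = ‖proj A (stdBasis n j)‖ ^ 2 := by
  rw [proj_apply, real_inner_self_eq_norm_sq]

theorem norm_proj_stdBasis_le_one (j : Fin n) : ‖proj A (stdBasis n j)‖ ≤ 1 :=
  (Submodule.norm_orthogonalProjectionOnto_apply_le _ _).trans_eq (norm_stdBasis n j)

end Projection

theorem stmt12_general {m n : ℕ}
    (A : EuclideanSpace ℝ (Fin n) →ₗ[ℝ] EuclideanSpace ℝ (Fin m))
    (hNP : ∀ i j : Fin n, i ≠ j → ∀ η : ℝ, A (stdBasis n i) ≠ η • A (stdBasis n j))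
    (j : Fin n) :
    (∀ i, i ≠ j →
      |(wgt A i)⁻¹ * proj A (stdBasis n j) i| < |(wgt A j)⁻¹ * proj A (stdBasis n j) j|) ∧
    (wgt A j)⁻¹ * proj A (stdBasis n j) j = ‖proj A (stdBasis n j)‖ ∧
    ‖proj A (stdBasis n j)‖ ≤ 1 := by
  -- `w⁻¹ * w * w = w` holds also for `w = 0`, so no positivity of `w_j` is needed here.
  have hj : (wgt A j)⁻¹ * proj A (stdBasis n j) j = ‖proj A (stdBasis n j)‖ := by
    rw [proj_stdBasis_apply_self, wgt, sq, ← mul_assoc, inv_mul_mul_self]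
  refine ⟨fun i hij ↦ ?_, hj, norm_proj_stdBasis_le_one A j⟩
  have hi : proj A (stdBasis n i) ≠ 0 := by
    simpa only [zero_smul] using mt (proj_eq_smul_proj_iff A).mp (hNP i j hij 0)
  rw [hj, abs_norm, abs_mul, abs_inv, wgt, abs_norm, inv_mul_lt_iff₀ (norm_pos_iff.mpr hi),
    proj_apply]
  exact abs_real_inner_lt_norm_mul_norm hi fun r ↦
    mt (proj_eq_smul_proj_iff A).mp (hNP j i hij.symm r)

theorem stmt12 {m n : ℕ}
    (A : EuclideanSpace ℝ (Fin n) →ₗ[ℝ] EuclideanSpace ℝ (Fin m))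
    (hA : ∀ i, stdBasis n i ∉ LinearMap.ker A)
    (hNP : ∀ i j : Fin n, i ≠ j → ∀ η : ℝ, A (stdBasis n i) ≠ η • A (stdBasis n j))
    (j : Fin n) :
    (∀ i, i ≠ j →
      |(wgt A i)⁻¹ * proj A (stdBasis n j) i| < |(wgt A j)⁻¹ * proj A (stdBasis n j) j|) ∧
    (wgt A j)⁻¹ * proj A (stdBasis n j) j = ‖proj A (stdBasis n j)‖ ∧
    ‖proj A (stdBasis n j)‖ ≤ 1 :=
  stmt12_general A hNP j
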